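/- arXiv:2512.06027 — 6 statements merged into one kernel-verified Lean document; each statement's English description precedes it below -/
import Mathlib

section
/- Let W be the potential vector field of a second Ricci soliton (M, g, W, λ) on an oriented closed Riemannian manifold of dimension n. If ∫_M ‖𝓛_W 𝓛_W g‖² dΩ_g ≤ ∫_M (nλ² − 2λR) dΩ_g, then (M, g) is Ricci flat, i.e. Ric = 0. -/
/-
Rewriting the soliton equation as `𝓛_W 𝓛_W g = λ g - Ric` and expanding the Hilbert–Schmidt
norm with `⟨g, g⟩ = n` and `⟨g, Ric⟩ = R` gives pointwise
`‖𝓛_W 𝓛_W g‖² = n λ² - 2 λ R + ‖Ric‖²`.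
The integral inequality therefore says `∫ ‖Ric‖² ≤ 0`; as `‖Ric‖²` is continuous and nonnegative
and the volume measure charges every nonempty open set, `‖Ric‖²` vanishes identically, and so
does `Ric` by definiteness.
-/

open MeasureTheory

theorem symm_pairing_smul_sub_self {V F : Type*} [AddCommGroup V] [Module ℝ V]
    [AddCommGroup F] [Module ℝ F] (B : V → V → F) (hsymm : ∀ T S, B T S = B S T)
    (hadd_left : ∀ T S U, B (T + S) U = B T U + B S U)
    (hsmul_left : ∀ (c : ℝ) T U, B (c • T) U = c • B T U) (c : ℝ) (g T : V) :
    B (c • g - T) (c • g - T) = c ^ 2 • B g g - (2 * c) • B g T + B T T := by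
  let L : V →ₗ[ℝ] V →ₗ[ℝ] F := LinearMap.mk₂ ℝ B hadd_left hsmul_left
    (fun T S U ↦ by rw [hsymm T, hadd_left, hsymm S, hsymm U])
    (fun c T S ↦ by rw [hsymm T, hsmul_left, hsymm S])
  have hL : ∀ T S, B T S = L T S := fun _ _ ↦ rfl
  simp only [hL, map_sub, map_smul, LinearMap.sub_apply, LinearMap.smul_apply]
  rw [← hL T g, hsymm T g, hL g T]
  module

theorem Continuous.eq_zero_of_integral_nonpos {X : Type*} [TopologicalSpace X] [MeasurableSpace X]
    {μ : Measure X} [μ.IsOpenPosMeasure] {f : X → ℝ} (hf : Continuous f) (hf_nonneg : 0 ≤ f)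
    (hf_int : Integrable f μ) (h : ∫ x, f x ∂μ ≤ 0) : f = 0 := by
  have hzero : ∫ x, f x ∂μ = 0 := le_antisymm h (integral_nonneg hf_nonneg)
  have hae : f =ᵐ[μ] 0 := (integral_eq_zero_iff_of_nonneg hf_nonneg hf_int).mp hzero
  exact (hf.ae_eq_iff_eq μ continuous_const).mp hae

theorem second_ricci_soliton_integral_inequality_implies_ricci_flat_general
    {E : Type*} [NormedAddCommGroup E] [NormedSpace ℝ E]
    {H : Type*} [TopologicalSpace H] {I : ModelWithCorners ℝ E H}
    {M : Type*} [TopologicalSpace M] [ChartedSpace H M]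
    [MeasurableSpace M]
    -- the Riemannian volume measure `Ω_g` (M is oriented)
    (μ : Measure M) [IsFiniteMeasure μ] [μ.IsOpenPosMeasure]
    -- `n` is the dimension of the manifold
    (n : ℕ)
    -- the metric `g`, the Ricci curvature `Ric` of `g`, and the tensor `LL = 𝓛_W 𝓛_W g`
    (g Ric LL : ∀ x : M, TangentSpace I x → TangentSpace I x → ℝ)
    -- the scalar curvature `R` of `g`
    (R : M → ℝ)
    (lambda : ℝ)
    -- the pointwise Hilbert–Schmidt inner product on 2-tensor fields induced by `g`
    (inner2 : (∀ x : M, TangentSpace I x → TangentSpace I x → ℝ) →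
      (∀ x : M, TangentSpace I x → TangentSpace I x → ℝ) → M → ℝ)
    (hsymm : ∀ T S, inner2 T S = inner2 S T)
    (hadd_left : ∀ T S U, inner2 (T + S) U = inner2 T U + inner2 S U)
    (hsmul_left : ∀ (c : ℝ) T U, inner2 (c • T) U = c • inner2 T U)
    -- positive definiteness of the Hilbert–Schmidt inner product
    (hpos : ∀ T (x : M), 0 ≤ inner2 T T x)
    (hdef : ∀ x : M, inner2 Ric Ric x = 0 ↔ Ric x = 0)
    (hcont : Continuous (inner2 Ric Ric))
    -- `⟨g, g⟩ = ‖Id‖² = n` and `⟨g, Ric⟩ = R`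
    (h_gg : inner2 g g = fun _ => (n : ℝ))
    (h_gRic : inner2 g Ric = R)
    -- integrability of the relevant functions on the closed manifold
    (hint_Ric : Integrable (inner2 Ric Ric) μ)
    (hint_R : Integrable R μ)
    -- second Ricci soliton equation: `𝓛_W 𝓛_W g + Ric = λ g`
    (hsoliton : LL + Ric = lambda • g)
    -- the integral inequality `∫ ‖𝓛_W 𝓛_W g‖² ≤ ∫ (n λ² − 2 λ R)`
    (hineq : ∫ x, inner2 LL LL x ∂μ ≤
      ∫ x, ((n : ℝ) * lambda ^ 2 - 2 * lambda * R x) ∂μ) :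
    ∀ x : M, Ric x = 0 := by
  have hLL : LL = lambda • g - Ric := eq_sub_of_add_eq hsoliton
  have hnorm_LL :
      inner2 LL LL = fun x ↦ (n : ℝ) * lambda ^ 2 - 2 * lambda * R x + inner2 Ric Ric x := by
    rw [hLL, symm_pairing_smul_sub_self inner2 hsymm hadd_left hsmul_left, h_gg, h_gRic]
    funext x
    simp only [Pi.add_apply, Pi.sub_apply, Pi.smul_apply, smul_eq_mul]
    ring
  have hint_rhs : Integrable (fun x ↦ (n : ℝ) * lambda ^ 2 - 2 * lambda * R x) μ :=
    (integrable_const _).sub (hint_R.const_mul _)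
  have hRic_integral : ∫ x, inner2 Ric Ric x ∂μ ≤ 0 := by
    rw [hnorm_LL, integral_add hint_rhs hint_Ric] at hineq
    linarith
  have hRic_norm : inner2 Ric Ric = 0 :=
    hcont.eq_zero_of_integral_nonpos (hpos Ric) hint_Ric hRic_integral
  exact fun x ↦ (hdef x).mp (congrFun hRic_norm x)

theorem second_ricci_soliton_integral_inequality_implies_ricci_flat
    {E : Type*} [NormedAddCommGroup E] [NormedSpace ℝ E] [FiniteDimensional ℝ E]
    {H : Type*} [TopologicalSpace H] {I : ModelWithCorners ℝ E H}
    {M : Type*} [TopologicalSpace M] [ChartedSpace H M]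
    [IsManifold I (⊤ : ℕ∞) M]
    -- `M` is closed: compact (without boundary)
    [CompactSpace M] [MeasurableSpace M] [BorelSpace M]
    -- the Riemannian volume measure `Ω_g` (M is oriented)
    (μ : Measure M) [IsFiniteMeasure μ] [μ.IsOpenPosMeasure]
    -- `n` is the dimension of the manifold
    (n : ℕ) (hn : Module.finrank ℝ E = n)
    -- the metric `g`, the Ricci curvature `Ric` of `g`, and the tensor `LL = 𝓛_W 𝓛_W g`
    (g Ric LL : ∀ x : M, TangentSpace I x → TangentSpace I x → ℝ)
    -- the potential vector field `W`
    (W : ∀ x : M, TangentSpace I x)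
    -- the scalar curvature `R` of `g`
    (R : M → ℝ)
    (lambda : ℝ)
    -- the pointwise Hilbert–Schmidt inner product on 2-tensor fields induced by `g`
    (inner2 : (∀ x : M, TangentSpace I x → TangentSpace I x → ℝ) →
      (∀ x : M, TangentSpace I x → TangentSpace I x → ℝ) → M → ℝ)
    (hsymm : ∀ T S, inner2 T S = inner2 S T)
    (hadd_left : ∀ T S U, inner2 (T + S) U = inner2 T U + inner2 S U)
    (hsmul_left : ∀ (c : ℝ) T U, inner2 (c • T) U = c • inner2 T U)
    -- positive definiteness of the Hilbert–Schmidt inner product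
    (hpos : ∀ T (x : M), 0 ≤ inner2 T T x)
    (hdef : ∀ x : M, inner2 Ric Ric x = 0 ↔ Ric x = 0)
    (hcont : Continuous (inner2 Ric Ric))
    -- `⟨g, g⟩ = ‖Id‖² = n` and `⟨g, Ric⟩ = R`
    (h_gg : inner2 g g = fun _ => (n : ℝ))
    (h_gRic : inner2 g Ric = R)
    -- integrability of the relevant functions on the closed manifold
    (hint_LL : Integrable (inner2 LL LL) μ)
    (hint_Ric : Integrable (inner2 Ric Ric) μ)
    (hint_R : Integrable R μ)
    -- second Ricci soliton equation: `𝓛_W 𝓛_W g + Ric = λ g`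
    (hsoliton : LL + Ric = lambda • g)
    -- the integral inequality `∫ ‖𝓛_W 𝓛_W g‖² ≤ ∫ (n λ² − 2 λ R)`
    (hineq : ∫ x, inner2 LL LL x ∂μ ≤
      ∫ x, ((n : ℝ) * lambda ^ 2 - 2 * lambda * R x) ∂μ) :
    ∀ x : M, Ric x = 0 :=
  second_ricci_soliton_integral_inequality_implies_ricci_flat_general μ n g Ric LL R lambda inner2
    hsymm hadd_left hsmul_left hpos hdef hcont h_gg h_gRic hint_Ric hint_R hsoliton hineq
end

section
/- Let (M, g) be a hypersurface isometrically immersed in a Riemannian manifold (N, ḡ) carrying a concurrent vector field W (i.e. ∇̄W = Id), and suppose the tangential part W^⊤ makes (M, g, W^⊤, λ) a second Ricci soliton and the shape operator is parallel (∇A_{W^⊥} = 0). Then (M, g) is Ricci flat if and only if A_{W^⊥}² = −2 A_{W^⊥} + ((λ − 4)/4) Id, i.e. (M, g) is a metallic shaped hypersurface with parameters r = −2 and s = (λ − 4)/4. -/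
/-!
With `∇A = 0` the soliton equation reads
`Ric(u, v) = λ g(u, v) − 4 g(u, v) − 8 g(Au, v) − 4 g(A²u, v) = −4 g(A²u + 2Au − ((λ − 4)/4) u, v)`,
so by nondegeneracy of `g` the Ricci tensor vanishes exactly when `A² + 2A − ((λ − 4)/4) Id = 0`.
-/

section Metallic

variable {V : Type*} [AddCommGroup V] [Module ℝ V]

def flatOfLeftLinear (g : V → V → ℝ) (hadd : ∀ u u' v, g (u + u') v = g u v + g u' v)
    (hsmul : ∀ (c : ℝ) u v, g (c • u) v = c * g u v) : V →ₗ[ℝ] (V → ℝ) where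
  toFun := g
  map_add' u u' := funext (hadd u u')
  map_smul' c u := funext (hsmul c u)

theorem ricci_eq_of_secondSoliton (B : V →ₗ[ℝ] (V → ℝ)) (A : V → V) (lambda : ℝ)
    (ric : V → V → ℝ) (u : V)
    (hsol : ∀ v, 2 * (2 * B u v + 4 * B (A u) v + 2 * B (A (A u)) v) + ric u v = lambda * B u v)
    (v : V) :
    ric u v = -4 * B (A (A u) - ((-2 : ℝ) • A u + ((lambda - 4) / 4) • u)) v := by
  simp only [map_sub, map_add, map_smul, Pi.sub_apply, Pi.add_apply, Pi.smul_apply, smul_eq_mul]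
  linear_combination hsol v

theorem ricci_eq_zero_iff_metallic_of_secondSoliton (B : V →ₗ[ℝ] (V → ℝ))
    (hB : Function.Injective B) (A : V → V) (lambda : ℝ) (ric : V → V → ℝ) (u : V)
    (hsol : ∀ v, 2 * (2 * B u v + 4 * B (A u) v + 2 * B (A (A u)) v) + ric u v = lambda * B u v) :
    (∀ v, ric u v = 0) ↔ A (A u) = (-2 : ℝ) • A u + ((lambda - 4) / 4) • u := by
  rw [← sub_eq_zero, ← map_eq_zero_iff B hB, funext_iff]
  simp only [ricci_eq_of_secondSoliton B A lambda ric u hsol, Pi.zero_apply, mul_eq_zero,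
    neg_eq_zero, four_ne_zero, false_or]

end Metallic

theorem hypersurface_second_soliton_parallel_shape_ricci_flat_iff_metallic_general
    {E : Type*} [NormedAddCommGroup E] [NormedSpace ℝ E]
    {H : Type*} [TopologicalSpace H] {I : ModelWithCorners ℝ E H}
    {M : Type*} [TopologicalSpace M] [ChartedSpace H M]
    -- the induced metric `g` (symmetric, bilinear, nondegenerate),
    -- the Ricci curvature `Ric` of `g`, the tensor `LL = 𝓛_{W^⊤}𝓛_{W^⊤}g`
    (g Ric LL : ∀ x : M, TangentSpace I x → TangentSpace I x → ℝ)
    (hg_add : ∀ (x : M) (u u' v : TangentSpace I x),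
      g x (u + u') v = g x u v + g x u' v)
    (hg_smul : ∀ (x : M) (c : ℝ) (u v : TangentSpace I x),
      g x (c • u) v = c * g x u v)
    (hg_nondeg : ∀ (x : M) (u : TangentSpace I x),
      (∀ v : TangentSpace I x, g x u v = 0) → u = 0)
    -- the shape operator `A = A_{W^⊥}` and its covariant derivative `∇_{W^⊤}A_{W^⊥}`
    (A nablaA : ∀ x : M, TangentSpace I x → TangentSpace I x)
    (lambda : ℝ)
    -- structural identity for `𝓛_{W^⊤}𝓛_{W^⊤}g` when `W` is concurrent (`∇̄W = Id`)
    (hLL : ∀ (x : M) (u v : TangentSpace I x),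
      LL x u v = 2 * (2 * g x u v + 4 * g x (A x u) v + 2 * g x (A x (A x u)) v
        + g x (nablaA x u) v))
    -- second Ricci soliton equation: `𝓛_{W^⊤}𝓛_{W^⊤}g + Ric = λ g`
    (hsoliton : ∀ (x : M) (u v : TangentSpace I x),
      LL x u v + Ric x u v = lambda * g x u v)
    -- the shape operator is parallel: `∇A_{W^⊥} = 0`
    (hparallel : ∀ (x : M) (u : TangentSpace I x), nablaA x u = 0) :
    -- `(M, g)` is Ricci flat iff `M` is metallic shaped with `r = −2`, `s = (λ−4)/4`
    (∀ (x : M) (u v : TangentSpace I x), Ric x u v = 0) ↔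
      (∀ (x : M) (u : TangentSpace I x),
        A x (A x u) = (-2 : ℝ) • A x u + ((lambda - 4) / 4) • u) := by
  refine forall_congr' fun x => forall_congr' fun u => ?_
  set B := flatOfLeftLinear (g x) (hg_add x) (hg_smul x)
  have hB : Function.Injective B := (injective_iff_map_eq_zero B).2 fun u hu =>
    hg_nondeg x u (congrFun hu)
  refine ricci_eq_zero_iff_metallic_of_secondSoliton B hB (A x) lambda (Ric x) u fun v => ?_
  have hsol := hsoliton x u v
  rwa [hLL, hparallel, show g x 0 v = 0 from congrFun (map_zero B) v, add_zero] at hsol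

theorem hypersurface_second_soliton_parallel_shape_ricci_flat_iff_metallic
    {E : Type*} [NormedAddCommGroup E] [NormedSpace ℝ E]
    {H : Type*} [TopologicalSpace H] {I : ModelWithCorners ℝ E H}
    {M : Type*} [TopologicalSpace M] [ChartedSpace H M]
    [IsManifold I (⊤ : ℕ∞) M]
    -- the induced metric `g` (symmetric, bilinear, nondegenerate),
    -- the Ricci curvature `Ric` of `g`, the tensor `LL = 𝓛_{W^⊤}𝓛_{W^⊤}g`
    (g Ric LL : ∀ x : M, TangentSpace I x → TangentSpace I x → ℝ)
    (hg_symm : ∀ (x : M) (u v : TangentSpace I x), g x u v = g x v u)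
    (hg_add : ∀ (x : M) (u u' v : TangentSpace I x),
      g x (u + u') v = g x u v + g x u' v)
    (hg_smul : ∀ (x : M) (c : ℝ) (u v : TangentSpace I x),
      g x (c • u) v = c * g x u v)
    (hg_nondeg : ∀ (x : M) (u : TangentSpace I x),
      (∀ v : TangentSpace I x, g x u v = 0) → u = 0)
    -- the tangential part `W^⊤` of the concurrent vector field `W` on the ambient space
    (Wtop : ∀ x : M, TangentSpace I x)
    -- the shape operator `A = A_{W^⊥}` and its covariant derivative `∇_{W^⊤}A_{W^⊥}`
    (A nablaA : ∀ x : M, TangentSpace I x → TangentSpace I x)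
    (lambda : ℝ)
    -- structural identity for `𝓛_{W^⊤}𝓛_{W^⊤}g` when `W` is concurrent (`∇̄W = Id`)
    (hLL : ∀ (x : M) (u v : TangentSpace I x),
      LL x u v = 2 * (2 * g x u v + 4 * g x (A x u) v + 2 * g x (A x (A x u)) v
        + g x (nablaA x u) v))
    -- second Ricci soliton equation: `𝓛_{W^⊤}𝓛_{W^⊤}g + Ric = λ g`
    (hsoliton : ∀ (x : M) (u v : TangentSpace I x),
      LL x u v + Ric x u v = lambda * g x u v)
    -- the shape operator is parallel: `∇A_{W^⊥} = 0`
    (hparallel : ∀ (x : M) (u : TangentSpace I x), nablaA x u = 0) :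
    -- `(M, g)` is Ricci flat iff `M` is metallic shaped with `r = −2`, `s = (λ−4)/4`
    (∀ (x : M) (u v : TangentSpace I x), Ric x u v = 0) ↔
      (∀ (x : M) (u : TangentSpace I x),
        A x (A x u) = (-2 : ℝ) • A x u + ((lambda - 4) / 4) • u) :=
  hypersurface_second_soliton_parallel_shape_ricci_flat_iff_metallic_general g Ric LL hg_add hg_smul
    hg_nondeg A nablaA lambda hLL hsoliton hparallel
end

section
/- Let (M^n, g, W^⊤, λ), n ≥ 3, be a second Ricci soliton where W^⊤ is the tangential part of a concurrent vector field W on the ambient manifold, and suppose (M, g) is W^⊤-totally umbilical, i.e. A_{W^⊥} = f·Id for a smooth function f on M. Then Ric(U, V) = (λ − 4 − 8f − 4f² − 2W^⊤(f)) g(U, V) for all tangent U, V; in particular, M is an Einstein manifold provided λ − 4 − 8f − 4f² − 2W^⊤(f) is a real constant. -/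
/-!
Umbilicity turns every term of the structural identity for `𝓛_{W^⊤}𝓛_{W^⊤}g` into a multiple
of `g`: `A_{W^⊥}U = fU`, `A_{W^⊥}²U = f²U` and `(∇_{W^⊤}A_{W^⊥})U = W^⊤(f)U`, so
`𝓛_{W^⊤}𝓛_{W^⊤}g = (4 + 8f + 4f² + 2W^⊤(f)) g`, and the soliton equation leaves
`Ric = (λ − 4 − 8f − 4f² − 2W^⊤(f)) g`.
-/

open Manifold

theorem lie_lie_form_of_umbilical {V : Type*} [SMul ℝ V] (g : V → V → ℝ)
    (hg_smul : ∀ (c : ℝ) (u v : V), g (c • u) v = c * g u v) (a d : ℝ) (u v : V) :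
    2 * (2 * g u v + 4 * g (a • u) v + 2 * g (a • a • u) v + g (d • u) v)
      = (4 + 8 * a + 4 * a ^ 2 + 2 * d) * g u v := by
  simp only [hg_smul]
  ring

theorem umbilical_second_soliton_is_einstein_general
    {E : Type*} [NormedAddCommGroup E] [NormedSpace ℝ E]
    {H : Type*} [TopologicalSpace H] {I : ModelWithCorners ℝ E H}
    {M : Type*} [TopologicalSpace M] [ChartedSpace H M]
    -- the induced metric `g`, the Ricci curvature `Ric` of `g`,
    -- and the tensor `LL = 𝓛_{W^⊤}𝓛_{W^⊤}g`
    (g Ric LL : ∀ x : M, TangentSpace I x → TangentSpace I x → ℝ)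
    (hg_smul : ∀ (x : M) (c : ℝ) (u v : TangentSpace I x),
      g x (c • u) v = c * g x u v)
    -- the tangential part `W^⊤` of the concurrent vector field `W`
    (Wtop : ∀ x : M, TangentSpace I x)
    -- the shape operator `A = A_{W^⊥}` and its covariant derivative `∇_{W^⊤}A_{W^⊥}`
    (A nablaA : ∀ x : M, TangentSpace I x → TangentSpace I x)
    (lambda : ℝ)
    -- `(M, g)` is `W^⊤`-totally umbilical: `A_{W^⊥} = f · Id`, `f` smooth
    (f : M → ℝ)
    (hA : ∀ (x : M) (u : TangentSpace I x), A x u = f x • u)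
    -- hence `(∇_{W^⊤}A_{W^⊥}) U = W^⊤(f) U`
    (hnablaA : ∀ (x : M) (u : TangentSpace I x),
      nablaA x u = (show ℝ from mfderiv I 𝓘(ℝ, ℝ) f x (Wtop x)) • u)
    -- structural identity for `𝓛_{W^⊤}𝓛_{W^⊤}g` when `W` is concurrent
    (hLL : ∀ (x : M) (u v : TangentSpace I x),
      LL x u v = 2 * (2 * g x u v + 4 * g x (A x u) v + 2 * g x (A x (A x u)) v
        + g x (nablaA x u) v))
    -- second Ricci soliton equation: `𝓛_{W^⊤}𝓛_{W^⊤}g + Ric = λ g`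
    (hsoliton : ∀ (x : M) (u v : TangentSpace I x),
      LL x u v + Ric x u v = lambda * g x u v) :
    (∀ (x : M) (u v : TangentSpace I x),
      Ric x u v = (lambda - 4 - 8 * f x - 4 * (f x) ^ 2
        - 2 * (show ℝ from mfderiv I 𝓘(ℝ, ℝ) f x (Wtop x))) * g x u v) ∧
    -- in particular `M` is Einstein provided the factor is a real constant
    ((∃ c : ℝ, ∀ x : M, lambda - 4 - 8 * f x - 4 * (f x) ^ 2
        - 2 * (show ℝ from mfderiv I 𝓘(ℝ, ℝ) f x (Wtop x)) = c) →
      ∃ c : ℝ, ∀ (x : M) (u v : TangentSpace I x), Ric x u v = c * g x u v) := by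
  have hRic : ∀ (x : M) (u v : TangentSpace I x),
      Ric x u v = (lambda - 4 - 8 * f x - 4 * (f x) ^ 2
        - 2 * (show ℝ from mfderiv I 𝓘(ℝ, ℝ) f x (Wtop x))) * g x u v := by
    intro x u v
    have h := hsoliton x u v
    rw [hLL, hA, hA, hnablaA, lie_lie_form_of_umbilical (g x) (hg_smul x)] at h
    linarith
  exact ⟨hRic, fun ⟨c, hc⟩ => ⟨c, fun x u v => by rw [hRic, hc]⟩⟩

theorem umbilical_second_soliton_is_einstein
    {E : Type*} [NormedAddCommGroup E] [NormedSpace ℝ E] [FiniteDimensional ℝ E]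
    {H : Type*} [TopologicalSpace H] {I : ModelWithCorners ℝ E H}
    {M : Type*} [TopologicalSpace M] [ChartedSpace H M]
    [IsManifold I (⊤ : ℕ∞) M]
    -- the dimension `n ≥ 3`
    (hn : 3 ≤ Module.finrank ℝ E)
    -- the induced metric `g`, the Ricci curvature `Ric` of `g`,
    -- and the tensor `LL = 𝓛_{W^⊤}𝓛_{W^⊤}g`
    (g Ric LL : ∀ x : M, TangentSpace I x → TangentSpace I x → ℝ)
    (hg_symm : ∀ (x : M) (u v : TangentSpace I x), g x u v = g x v u)
    (hg_add : ∀ (x : M) (u u' v : TangentSpace I x),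
      g x (u + u') v = g x u v + g x u' v)
    (hg_smul : ∀ (x : M) (c : ℝ) (u v : TangentSpace I x),
      g x (c • u) v = c * g x u v)
    -- the tangential part `W^⊤` of the concurrent vector field `W`
    (Wtop : ∀ x : M, TangentSpace I x)
    -- the shape operator `A = A_{W^⊥}` and its covariant derivative `∇_{W^⊤}A_{W^⊥}`
    (A nablaA : ∀ x : M, TangentSpace I x → TangentSpace I x)
    (lambda : ℝ)
    -- `(M, g)` is `W^⊤`-totally umbilical: `A_{W^⊥} = f · Id`, `f` smooth
    (f : M → ℝ) (hf : ContMDiff I 𝓘(ℝ, ℝ) (⊤ : ℕ∞) f)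
    (hA : ∀ (x : M) (u : TangentSpace I x), A x u = f x • u)
    -- hence `(∇_{W^⊤}A_{W^⊥}) U = W^⊤(f) U`
    (hnablaA : ∀ (x : M) (u : TangentSpace I x),
      nablaA x u = (show ℝ from mfderiv I 𝓘(ℝ, ℝ) f x (Wtop x)) • u)
    -- structural identity for `𝓛_{W^⊤}𝓛_{W^⊤}g` when `W` is concurrent
    (hLL : ∀ (x : M) (u v : TangentSpace I x),
      LL x u v = 2 * (2 * g x u v + 4 * g x (A x u) v + 2 * g x (A x (A x u)) v
        + g x (nablaA x u) v))
    -- second Ricci soliton equation: `𝓛_{W^⊤}𝓛_{W^⊤}g + Ric = λ g`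
    (hsoliton : ∀ (x : M) (u v : TangentSpace I x),
      LL x u v + Ric x u v = lambda * g x u v) :
    (∀ (x : M) (u v : TangentSpace I x),
      Ric x u v = (lambda - 4 - 8 * f x - 4 * (f x) ^ 2
        - 2 * (show ℝ from mfderiv I 𝓘(ℝ, ℝ) f x (Wtop x))) * g x u v) ∧
    -- in particular `M` is Einstein provided the factor is a real constant
    ((∃ c : ℝ, ∀ x : M, lambda - 4 - 8 * f x - 4 * (f x) ^ 2
        - 2 * (show ℝ from mfderiv I 𝓘(ℝ, ℝ) f x (Wtop x)) = c) →
      ∃ c : ℝ, ∀ (x : M) (u v : TangentSpace I x), Ric x u v = c * g x u v) :=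
  umbilical_second_soliton_is_einstein_general g Ric LL hg_smul Wtop A nablaA lambda f hA hnablaA
    hLL hsoliton
end

section
/- Let M = M₁ ×_f M₂ be a warped product of semi-Riemannian manifolds with metric g = g₁ + f²g₂, and let W = W₁ + W₂ be a 2-Killing vector field on M with W_i tangent to M_i. Then W₁ is the potential vector field of a second Ricci soliton (M₁, g₁, W₁, λ) if and only if (M₁, g₁) is Einstein with Ric₁ = λ g₁. -/
/-!
Evaluating the warped-product decomposition of `𝓛_W 𝓛_W g` on vectors with zero fibre
components kills every term except `𝓛_{W₁} 𝓛_{W₁} g₁`, so `W₁` is 2-Killing on the base.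
The second Ricci soliton equation for `W₁` then reads `Ric₁ = λ g₁`.
-/

open Manifold

theorem base_eq_zero_of_warped_sum_eq_zero {X Y : Type*} {T₁ : X → Type*} {T₂ : Y → Type*}
    [∀ y, Zero (T₂ y)] [Nonempty Y] (A : ∀ x, T₁ x → T₁ x → ℝ)
    (B C D : ∀ y, T₂ y → T₂ y → ℝ) (a b c : X → ℝ)
    (hB : ∀ y, B y 0 0 = 0) (hC : ∀ y, C y 0 0 = 0) (hD : ∀ y, D y 0 0 = 0)
    (h : ∀ x y u₁ v₁ u₂ v₂,
      A x u₁ v₁ + a x * B y u₂ v₂ + b x * C y u₂ v₂ + c x * D y u₂ v₂ = 0)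
    (x : X) (u v : T₁ x) : A x u v = 0 := by
  let y := Classical.arbitrary Y
  simpa [hB y, hC y, hD y] using h x y u v 0 0

theorem warped_product_two_killing_first_factor_soliton_iff_einstein_general
    -- the base (M₁, g₁)
    {E₁ : Type*} [NormedAddCommGroup E₁] [NormedSpace ℝ E₁]
    {H₁ : Type*} [TopologicalSpace H₁] {I₁ : ModelWithCorners ℝ E₁ H₁}
    {M₁ : Type*} [TopologicalSpace M₁] [ChartedSpace H₁ M₁]
    -- the fibre (M₂, g₂)
    {E₂ : Type*} [NormedAddCommGroup E₂] [NormedSpace ℝ E₂]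
    {H₂ : Type*} [TopologicalSpace H₂] {I₂ : ModelWithCorners ℝ E₂ H₂}
    {M₂ : Type*} [TopologicalSpace M₂] [ChartedSpace H₂ M₂]
    [Nonempty M₂]
    -- the warping function `f : M₁ → ℝ⁺`
    (f : M₁ → ℝ)
    -- metrics, Ricci curvature of `g₁`, and (iterated) Lie derivative tensors
    (g₁ Ric₁ LL₁ : ∀ x : M₁, TangentSpace I₁ x → TangentSpace I₁ x → ℝ)
    (g₂ LWg₂ LL₂ : ∀ y : M₂, TangentSpace I₂ y → TangentSpace I₂ y → ℝ)
    -- `W₁(f²)` and `W₁(W₁(f²))` on `M₁`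
    (W1f2 W1W1f2 : M₁ → ℝ)
    -- the tensors on `M₂` are bilinear, in particular they vanish on zero vectors
    (hLL₂_zero : ∀ y : M₂, LL₂ y 0 0 = 0)
    (hLWg₂_zero : ∀ y : M₂, LWg₂ y 0 0 = 0)
    (hg₂_zero : ∀ y : M₂, g₂ y 0 0 = 0)
    (lambda : ℝ)
    -- `W = W₁ + W₂` is 2-Killing on `M₁ ×_f M₂`: `𝓛_W 𝓛_W g = 0`, expressed
    -- through the warped-product decomposition of `𝓛_W 𝓛_W g`
    (h2Killing : ∀ (x : M₁) (y : M₂) (u₁ v₁ : TangentSpace I₁ x)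
      (u₂ v₂ : TangentSpace I₂ y),
      LL₁ x u₁ v₁ + (f x) ^ 2 * LL₂ y u₂ v₂ + 2 * W1f2 x * LWg₂ y u₂ v₂
        + W1W1f2 x * g₂ y u₂ v₂ = 0) :
    -- `(M₁, g₁, W₁, λ)` is a second Ricci soliton iff `(M₁, g₁)` is Einstein
    (∀ (x : M₁) (u v : TangentSpace I₁ x),
        LL₁ x u v + Ric₁ x u v = lambda * g₁ x u v) ↔
      ∀ (x : M₁) (u v : TangentSpace I₁ x), Ric₁ x u v = lambda * g₁ x u v := by
  have hLL₁ := base_eq_zero_of_warped_sum_eq_zero LL₁ LL₂ LWg₂ g₂ (fun x => f x ^ 2)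
    (fun x => 2 * W1f2 x) W1W1f2 hLL₂_zero hLWg₂_zero hg₂_zero h2Killing
  exact forall₃_congr fun x u v => by rw [hLL₁, zero_add]

theorem warped_product_two_killing_first_factor_soliton_iff_einstein
    -- the base (M₁, g₁)
    {E₁ : Type*} [NormedAddCommGroup E₁] [NormedSpace ℝ E₁]
    {H₁ : Type*} [TopologicalSpace H₁] {I₁ : ModelWithCorners ℝ E₁ H₁}
    {M₁ : Type*} [TopologicalSpace M₁] [ChartedSpace H₁ M₁]
    [IsManifold I₁ (⊤ : ℕ∞) M₁]
    -- the fibre (M₂, g₂)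
    {E₂ : Type*} [NormedAddCommGroup E₂] [NormedSpace ℝ E₂]
    {H₂ : Type*} [TopologicalSpace H₂] {I₂ : ModelWithCorners ℝ E₂ H₂}
    {M₂ : Type*} [TopologicalSpace M₂] [ChartedSpace H₂ M₂]
    [IsManifold I₂ (⊤ : ℕ∞) M₂] [Nonempty M₂]
    -- the warping function `f : M₁ → ℝ⁺`
    (f : M₁ → ℝ) (hf_pos : ∀ x, 0 < f x) (hf : ContMDiff I₁ 𝓘(ℝ, ℝ) (⊤ : ℕ∞) f)
    -- metrics, Ricci curvature of `g₁`, and (iterated) Lie derivative tensors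
    (g₁ Ric₁ LL₁ : ∀ x : M₁, TangentSpace I₁ x → TangentSpace I₁ x → ℝ)
    (g₂ LWg₂ LL₂ : ∀ y : M₂, TangentSpace I₂ y → TangentSpace I₂ y → ℝ)
    -- `Wᵢ` tangent to `Mᵢ`
    (W₁ : ∀ x : M₁, TangentSpace I₁ x) (W₂ : ∀ y : M₂, TangentSpace I₂ y)
    -- `W₁(f²)` and `W₁(W₁(f²))` on `M₁`
    (W1f2 W1W1f2 : M₁ → ℝ)
    (hW1f2 : ∀ x, W1f2 x =
      (show ℝ from mfderiv I₁ 𝓘(ℝ, ℝ) (fun y => (f y) ^ 2) x (W₁ x)))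
    (hW1W1f2 : ∀ x, W1W1f2 x =
      (show ℝ from mfderiv I₁ 𝓘(ℝ, ℝ) W1f2 x (W₁ x)))
    -- the tensors on `M₂` are bilinear, in particular they vanish on zero vectors
    (hLL₂_zero : ∀ y : M₂, LL₂ y 0 0 = 0)
    (hLWg₂_zero : ∀ y : M₂, LWg₂ y 0 0 = 0)
    (hg₂_zero : ∀ y : M₂, g₂ y 0 0 = 0)
    (lambda : ℝ)
    -- `W = W₁ + W₂` is 2-Killing on `M₁ ×_f M₂`: `𝓛_W 𝓛_W g = 0`, expressed
    -- through the warped-product decomposition of `𝓛_W 𝓛_W g`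
    (h2Killing : ∀ (x : M₁) (y : M₂) (u₁ v₁ : TangentSpace I₁ x)
      (u₂ v₂ : TangentSpace I₂ y),
      LL₁ x u₁ v₁ + (f x) ^ 2 * LL₂ y u₂ v₂ + 2 * W1f2 x * LWg₂ y u₂ v₂
        + W1W1f2 x * g₂ y u₂ v₂ = 0) :
    -- `(M₁, g₁, W₁, λ)` is a second Ricci soliton iff `(M₁, g₁)` is Einstein
    (∀ (x : M₁) (u v : TangentSpace I₁ x),
        LL₁ x u v + Ric₁ x u v = lambda * g₁ x u v) ↔
      ∀ (x : M₁) (u v : TangentSpace I₁ x), Ric₁ x u v = lambda * g₁ x u v :=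
  warped_product_two_killing_first_factor_soliton_iff_einstein_general f g₁ Ric₁ LL₁ g₂ LWg₂ LL₂
    W1f2 W1W1f2 hLL₂_zero hLWg₂_zero hg₂_zero lambda h2Killing
end

section
/- Let M = M₁ ×_f M₂ be a warped product of semi-Riemannian manifolds with metric g = g₁ + f²g₂, and let W = W₁ + W₂ be a 2-Killing vector field on M with W_i tangent to M_i. Then (M₂, g₂, W₂, λ) is a second Ricci soliton if and only if Ric₂ − (2/f²) W₁(f²) 𝓛_{W₂}g₂ = ( λ + W₁(W₁(f²))/f² ) g₂; in particular (M₂, g₂) is then an h-almost Ricci soliton with h = −4 W₁(ln f). -/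
/-!
Restricting the 2-Killing identity to vectors tangent to the fibre (where the `𝓛_{W₁}𝓛_{W₁}g₁`
term vanishes) gives `f² 𝓛_{W₂}𝓛_{W₂}g₂ + 2W₁(f²) 𝓛_{W₂}g₂ + W₁(W₁(f²)) g₂ = 0`; since `f² > 0`
this lets one trade `𝓛_{W₂}𝓛_{W₂}g₂` for the other two terms, pointwise in the base. The factor
`h` comes from the chain rule `(2/f²) W₁(f²) = 4 f W₁(f) / f² = 4 W₁(ln f)`.
-/

open Manifold

section ScalarChainRule

variable {𝕜 : Type*} [NontriviallyNormedField 𝕜]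
  {E : Type*} [NormedAddCommGroup E] [NormedSpace 𝕜 E]
  {H : Type*} [TopologicalSpace H] {I : ModelWithCorners 𝕜 E H}
  {M : Type*} [TopologicalSpace M] [ChartedSpace H M] {f : M → 𝕜} {x : M}

/- `mfderiv` takes values in `TangentSpace 𝓘(𝕜, 𝕜) _`, a synonym of `𝕜` that carries no
multiplication; `show 𝕜 from` reads the value in `𝕜`, as the statement of the theorem does. -/
theorem mfderiv_scalar_comp_apply {g : 𝕜 → 𝕜} (hg : DifferentiableAt 𝕜 g (f x))
    (hf : MDifferentiableAt I 𝓘(𝕜, 𝕜) f x) (v : TangentSpace I x) :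
    (show 𝕜 from mfderiv I 𝓘(𝕜, 𝕜) (g ∘ f) x v)
      = deriv g (f x) * (show 𝕜 from mfderiv I 𝓘(𝕜, 𝕜) f x v) := by
  rw [(hg.hasDerivAt.hasFDerivAt.hasMFDerivAt.comp x hf.hasMFDerivAt).mfderiv]
  exact mul_comm _ _

theorem mfderiv_sq_apply (hf : MDifferentiableAt I 𝓘(𝕜, 𝕜) f x) (v : TangentSpace I x) :
    (show 𝕜 from mfderiv I 𝓘(𝕜, 𝕜) (fun y => f y ^ 2) x v)
      = 2 * f x * (show 𝕜 from mfderiv I 𝓘(𝕜, 𝕜) f x v) := by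
  rw [← Function.comp_def (fun t : 𝕜 => t ^ 2),
    mfderiv_scalar_comp_apply (differentiableAt_pow 2) hf, deriv_pow_field]
  ring

end ScalarChainRule

section

variable {E : Type*} [NormedAddCommGroup E] [NormedSpace ℝ E]
  {H : Type*} [TopologicalSpace H] {I : ModelWithCorners ℝ E H}
  {M : Type*} [TopologicalSpace M] [ChartedSpace H M] {f : M → ℝ} {x : M}

theorem mfderiv_log_apply (hf : MDifferentiableAt I 𝓘(ℝ, ℝ) f x) (hx : f x ≠ 0)
    (v : TangentSpace I x) :
    (show ℝ from mfderiv I 𝓘(ℝ, ℝ) (fun y => Real.log (f y)) x v)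
      = (show ℝ from mfderiv I 𝓘(ℝ, ℝ) f x v) / f x := by
  rw [← Function.comp_def Real.log,
    mfderiv_scalar_comp_apply (Real.differentiableAt_log hx) hf, Real.deriv_log, inv_mul_eq_div]

theorem two_div_sq_mul_mfderiv_sq_apply (hf : MDifferentiableAt I 𝓘(ℝ, ℝ) f x) (hx : f x ≠ 0)
    (v : TangentSpace I x) :
    2 / f x ^ 2 * (show ℝ from mfderiv I 𝓘(ℝ, ℝ) (fun y => f y ^ 2) x v)
      = 4 * (show ℝ from mfderiv I 𝓘(ℝ, ℝ) (fun y => Real.log (f y)) x v) := by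
  rw [mfderiv_sq_apply hf, mfderiv_log_apply hf hx]
  generalize (show ℝ from mfderiv I 𝓘(ℝ, ℝ) f x v) = d
  field_simp
  ring

end

theorem second_soliton_iff_of_fibre_two_killing {c a b LL L Ric g lam : ℝ} (hc : c ≠ 0)
    (hK : c * LL + 2 * a * L + b * g = 0) :
    LL + Ric = lam * g ↔ Ric - 2 / c * a * L = (lam + b / c) * g := by
  constructor
  · intro h
    field_simp
    linear_combination c * h - hK
  · intro h
    field_simp at h
    have : c * (LL + Ric - lam * g) = 0 := by linear_combination h + hK
    linear_combination (mul_eq_zero.mp this).resolve_left hc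

theorem warped_product_two_killing_second_factor_soliton_iff_general
    -- the base (M₁, g₁)
    {E₁ : Type*} [NormedAddCommGroup E₁] [NormedSpace ℝ E₁]
    {H₁ : Type*} [TopologicalSpace H₁] {I₁ : ModelWithCorners ℝ E₁ H₁}
    {M₁ : Type*} [TopologicalSpace M₁] [ChartedSpace H₁ M₁]
    [Nonempty M₁]
    -- the fibre (M₂, g₂)
    {E₂ : Type*} [NormedAddCommGroup E₂] [NormedSpace ℝ E₂]
    {H₂ : Type*} [TopologicalSpace H₂] {I₂ : ModelWithCorners ℝ E₂ H₂}
    {M₂ : Type*} [TopologicalSpace M₂] [ChartedSpace H₂ M₂]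
    -- the warping function `f : M₁ → ℝ⁺`
    (f : M₁ → ℝ) (hf_pos : ∀ x, 0 < f x) (hf : ContMDiff I₁ 𝓘(ℝ, ℝ) (⊤ : ℕ∞) f)
    -- metrics, Ricci curvature of `g₂`, and (iterated) Lie derivative tensors
    (LL₁ : ∀ x : M₁, TangentSpace I₁ x → TangentSpace I₁ x → ℝ)
    (g₂ Ric₂ LWg₂ LL₂ : ∀ y : M₂, TangentSpace I₂ y → TangentSpace I₂ y → ℝ)
    -- `Wᵢ` tangent to `Mᵢ`
    (W₁ : ∀ x : M₁, TangentSpace I₁ x)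
    -- `W₁(f²)`, `W₁(W₁(f²))` and `W₁(ln f)` on `M₁`
    (W1f2 W1W1f2 W1lnf : M₁ → ℝ)
    (hW1f2 : ∀ x, W1f2 x =
      (show ℝ from mfderiv I₁ 𝓘(ℝ, ℝ) (fun y => (f y) ^ 2) x (W₁ x)))
    (hW1lnf : ∀ x, W1lnf x =
      (show ℝ from mfderiv I₁ 𝓘(ℝ, ℝ) (fun y => Real.log (f y)) x (W₁ x)))
    -- the tensor `LL₁` is bilinear, in particular it vanishes on zero vectors
    (hLL₁_zero : ∀ x : M₁, LL₁ x 0 0 = 0)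
    (lambda : ℝ)
    -- `W = W₁ + W₂` is 2-Killing on `M₁ ×_f M₂`: `𝓛_W 𝓛_W g = 0`, expressed
    -- through the warped-product decomposition of `𝓛_W 𝓛_W g`
    (h2Killing : ∀ (x : M₁) (y : M₂) (u₁ v₁ : TangentSpace I₁ x)
      (u₂ v₂ : TangentSpace I₂ y),
      LL₁ x u₁ v₁ + (f x) ^ 2 * LL₂ y u₂ v₂ + 2 * W1f2 x * LWg₂ y u₂ v₂
        + W1W1f2 x * g₂ y u₂ v₂ = 0) :
    -- `(M₂, g₂, W₂, λ)` is a second Ricci soliton iff the stated equation holds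
    ((∀ (y : M₂) (u v : TangentSpace I₂ y),
        LL₂ y u v + Ric₂ y u v = lambda * g₂ y u v) ↔
      ∀ (x : M₁) (y : M₂) (u v : TangentSpace I₂ y),
        Ric₂ y u v - (2 / (f x) ^ 2) * W1f2 x * LWg₂ y u v
          = (lambda + W1W1f2 x / (f x) ^ 2) * g₂ y u v) ∧
    -- in particular `(M₂, g₂)` is then an `h`-almost Ricci soliton with `h = −4W₁(ln f)`
    ((∀ (y : M₂) (u v : TangentSpace I₂ y),
        LL₂ y u v + Ric₂ y u v = lambda * g₂ y u v) →
      ∀ (x : M₁) (y : M₂) (u v : TangentSpace I₂ y),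
        (-(4 * W1lnf x)) * LWg₂ y u v + Ric₂ y u v
          = (lambda + W1W1f2 x / (f x) ^ 2) * g₂ y u v) := by
  have hfibre : ∀ x y (u v : TangentSpace I₂ y),
      f x ^ 2 * LL₂ y u v + 2 * W1f2 x * LWg₂ y u v + W1W1f2 x * g₂ y u v = 0 := fun x y u v => by
    simpa only [hLL₁_zero, zero_add] using h2Killing x y 0 0 u v
  have hsoliton := fun x y (u v : TangentSpace I₂ y) =>
    second_soliton_iff_of_fibre_two_killing (Ric := Ric₂ y u v) (lam := lambda)
      (pow_ne_zero 2 (hf_pos x).ne') (hfibre x y u v)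
  have hlog : ∀ x, 2 / f x ^ 2 * W1f2 x = 4 * W1lnf x := fun x => by
    rw [hW1f2, hW1lnf]
    exact two_div_sq_mul_mfderiv_sq_apply (hf.mdifferentiable (by simp) x) (hf_pos x).ne' _
  refine ⟨⟨fun h x y u v => (hsoliton x y u v).mp (h y u v),
    fun h y u v => (hsoliton (Classical.arbitrary M₁) y u v).mpr (h _ y u v)⟩, ?_⟩
  intro h x y u v
  rw [← hlog]
  linear_combination (hsoliton x y u v).mp (h y u v)

theorem warped_product_two_killing_second_factor_soliton_iff
    -- the base (M₁, g₁)
    {E₁ : Type*} [NormedAddCommGroup E₁] [NormedSpace ℝ E₁]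
    {H₁ : Type*} [TopologicalSpace H₁] {I₁ : ModelWithCorners ℝ E₁ H₁}
    {M₁ : Type*} [TopologicalSpace M₁] [ChartedSpace H₁ M₁]
    [IsManifold I₁ (⊤ : ℕ∞) M₁] [Nonempty M₁]
    -- the fibre (M₂, g₂)
    {E₂ : Type*} [NormedAddCommGroup E₂] [NormedSpace ℝ E₂]
    {H₂ : Type*} [TopologicalSpace H₂] {I₂ : ModelWithCorners ℝ E₂ H₂}
    {M₂ : Type*} [TopologicalSpace M₂] [ChartedSpace H₂ M₂]
    [IsManifold I₂ (⊤ : ℕ∞) M₂]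
    -- the warping function `f : M₁ → ℝ⁺`
    (f : M₁ → ℝ) (hf_pos : ∀ x, 0 < f x) (hf : ContMDiff I₁ 𝓘(ℝ, ℝ) (⊤ : ℕ∞) f)
    -- metrics, Ricci curvature of `g₂`, and (iterated) Lie derivative tensors
    (g₁ LL₁ : ∀ x : M₁, TangentSpace I₁ x → TangentSpace I₁ x → ℝ)
    (g₂ Ric₂ LWg₂ LL₂ : ∀ y : M₂, TangentSpace I₂ y → TangentSpace I₂ y → ℝ)
    -- `Wᵢ` tangent to `Mᵢ`
    (W₁ : ∀ x : M₁, TangentSpace I₁ x) (W₂ : ∀ y : M₂, TangentSpace I₂ y)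
    -- `W₁(f²)`, `W₁(W₁(f²))` and `W₁(ln f)` on `M₁`
    (W1f2 W1W1f2 W1lnf : M₁ → ℝ)
    (hW1f2 : ∀ x, W1f2 x =
      (show ℝ from mfderiv I₁ 𝓘(ℝ, ℝ) (fun y => (f y) ^ 2) x (W₁ x)))
    (hW1W1f2 : ∀ x, W1W1f2 x =
      (show ℝ from mfderiv I₁ 𝓘(ℝ, ℝ) W1f2 x (W₁ x)))
    (hW1lnf : ∀ x, W1lnf x =
      (show ℝ from mfderiv I₁ 𝓘(ℝ, ℝ) (fun y => Real.log (f y)) x (W₁ x)))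
    -- the tensor `LL₁` is bilinear, in particular it vanishes on zero vectors
    (hLL₁_zero : ∀ x : M₁, LL₁ x 0 0 = 0)
    (lambda : ℝ)
    -- `W = W₁ + W₂` is 2-Killing on `M₁ ×_f M₂`: `𝓛_W 𝓛_W g = 0`, expressed
    -- through the warped-product decomposition of `𝓛_W 𝓛_W g`
    (h2Killing : ∀ (x : M₁) (y : M₂) (u₁ v₁ : TangentSpace I₁ x)
      (u₂ v₂ : TangentSpace I₂ y),
      LL₁ x u₁ v₁ + (f x) ^ 2 * LL₂ y u₂ v₂ + 2 * W1f2 x * LWg₂ y u₂ v₂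
        + W1W1f2 x * g₂ y u₂ v₂ = 0) :
    -- `(M₂, g₂, W₂, λ)` is a second Ricci soliton iff the stated equation holds
    ((∀ (y : M₂) (u v : TangentSpace I₂ y),
        LL₂ y u v + Ric₂ y u v = lambda * g₂ y u v) ↔
      ∀ (x : M₁) (y : M₂) (u v : TangentSpace I₂ y),
        Ric₂ y u v - (2 / (f x) ^ 2) * W1f2 x * LWg₂ y u v
          = (lambda + W1W1f2 x / (f x) ^ 2) * g₂ y u v) ∧
    -- in particular `(M₂, g₂)` is then an `h`-almost Ricci soliton with `h = −4W₁(ln f)`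
    ((∀ (y : M₂) (u v : TangentSpace I₂ y),
        LL₂ y u v + Ric₂ y u v = lambda * g₂ y u v) →
      ∀ (x : M₁) (y : M₂) (u v : TangentSpace I₂ y),
        (-(4 * W1lnf x)) * LWg₂ y u v + Ric₂ y u v
          = (lambda + W1W1f2 x / (f x) ^ 2) * g₂ y u v) :=
  warped_product_two_killing_second_factor_soliton_iff_general f hf_pos hf LL₁ g₂ Ric₂ LWg₂ LL₂ W₁
    W1f2 W1W1f2 W1lnf hW1f2 hW1lnf hLL₁_zero lambda h2Killing
end

section
/- Suppose the warped product M₁ ×_f M₂ (with dim M₂ = k) admits a second Ricci soliton structure with potential field W = W₁ + W₂ (W_i tangent to M_i) and constant λ. Then on M₁: 𝓛_{W₁}𝓛_{W₁}g₁ + Ric₁ − (k/f) Hess₁ f = λ g₁. Moreover, (M₁, g₁, W₁, λ) is itself a second Ricci soliton if and only if Hess₁ f = 0. -/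
/-!
Evaluating the soliton equation of `M₁ ×_f M₂` on vectors tangent to `M₁` (zero fibre
components) kills every fibre term and leaves the base equation. Since `k / f` never vanishes,
the defect `-(k / f) Hess₁ f` between it and the soliton equation of `M₁` vanishes exactly
when `Hess₁ f` does.
-/

open Manifold

theorem sub_mul_eq_iff_eq_zero {a b c h : ℝ} (hc : c ≠ 0) (habc : a - c * h = b) :
    a = b ↔ h = 0 := by
  rw [← habc, eq_comm, sub_eq_self, mul_eq_zero, or_iff_right hc]

theorem forall_eq_iff_forall_eq_zero_of_sub_mul_eq {X : Type*} {T : X → Type*}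
    {A B H : ∀ x, T x → T x → ℝ} {c : X → ℝ} (hc : ∀ x, c x ≠ 0)
    (h : ∀ x u v, A x u v - c x * H x u v = B x u v) :
    (∀ x u v, A x u v = B x u v) ↔ ∀ x u v, H x u v = 0 :=
  forall_congr' fun x => forall₂_congr fun u v => sub_mul_eq_iff_eq_zero (hc x) (h x u v)

theorem warped_product_second_soliton_base_equation_general
    -- the base (M₁, g₁)
    {E₁ : Type*} [NormedAddCommGroup E₁] [NormedSpace ℝ E₁]
    {H₁ : Type*} [TopologicalSpace H₁] {I₁ : ModelWithCorners ℝ E₁ H₁}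
    {M₁ : Type*} [TopologicalSpace M₁] [ChartedSpace H₁ M₁]
    -- the fibre (M₂, g₂), of dimension `k`
    {E₂ : Type*} [NormedAddCommGroup E₂] [NormedSpace ℝ E₂]
    {H₂ : Type*} [TopologicalSpace H₂] {I₂ : ModelWithCorners ℝ E₂ H₂}
    {M₂ : Type*} [TopologicalSpace M₂] [ChartedSpace H₂ M₂]
    [Nonempty M₂]
    (k : ℕ) (hk : 0 < k)
    -- the warping function `f : M₁ → ℝ⁺`
    (f : M₁ → ℝ) (hf_pos : ∀ x, 0 < f x)
    -- tensors on `M₁`: metric, Ricci curvature, `𝓛_{W₁}𝓛_{W₁}g₁`, `Hess₁ f`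
    (g₁ Ric₁ LL₁ Hess1f : ∀ x : M₁, TangentSpace I₁ x → TangentSpace I₁ x → ℝ)
    -- tensors on `M₂`: metric, Ricci curvature, `𝓛_{W₂}g₂`, `𝓛_{W₂}𝓛_{W₂}g₂`
    (g₂ Ric₂ LWg₂ LL₂ : ∀ y : M₂, TangentSpace I₂ y → TangentSpace I₂ y → ℝ)
    -- `W₁(f²)`, `W₁(W₁(f²))`, `Δf` and `⟨∇f, ∇f⟩` on `(M₁, g₁)`
    (W1f2 W1W1f2 lapf gradfSq : M₁ → ℝ)
    -- the tensors on `M₂` vanish on zero vectors (bilinearity)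
    (hLL₂_zero : ∀ y : M₂, LL₂ y 0 0 = 0)
    (hLWg₂_zero : ∀ y : M₂, LWg₂ y 0 0 = 0)
    (hg₂_zero : ∀ y : M₂, g₂ y 0 0 = 0)
    (hRic₂_zero : ∀ y : M₂, Ric₂ y 0 0 = 0)
    (lambda : ℝ)
    -- the second Ricci soliton equation `𝓛_W𝓛_W g + Ric = λ g` on `M₁ ×_f M₂`,
    -- written through the warped-product decompositions of `𝓛_W𝓛_W g` and `Ric`
    (hsoliton : ∀ (x : M₁) (y : M₂) (u₁ v₁ : TangentSpace I₁ x)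
      (u₂ v₂ : TangentSpace I₂ y),
      (LL₁ x u₁ v₁ + (f x) ^ 2 * LL₂ y u₂ v₂ + 2 * W1f2 x * LWg₂ y u₂ v₂
          + W1W1f2 x * g₂ y u₂ v₂)
        + ((Ric₁ x u₁ v₁ - ((k : ℝ) / f x) * Hess1f x u₁ v₁)
          + (Ric₂ y u₂ v₂ - (lapf x / f x + ((k : ℝ) - 1) * gradfSq x / (f x) ^ 2)
              * g₂ y u₂ v₂))
        = lambda * (g₁ x u₁ v₁ + (f x) ^ 2 * g₂ y u₂ v₂)) :
    -- (i) the induced equation on the base `M₁`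
    (∀ (x : M₁) (u v : TangentSpace I₁ x),
      LL₁ x u v + Ric₁ x u v - ((k : ℝ) / f x) * Hess1f x u v
        = lambda * g₁ x u v) ∧
    -- (ii) `(M₁, g₁, W₁, λ)` is a second Ricci soliton iff `Hess₁ f = 0`
    ((∀ (x : M₁) (u v : TangentSpace I₁ x),
        LL₁ x u v + Ric₁ x u v = lambda * g₁ x u v) ↔
      ∀ (x : M₁) (u v : TangentSpace I₁ x), Hess1f x u v = 0) := by
  obtain ⟨y⟩ := ‹Nonempty M₂›
  have base : ∀ (x : M₁) (u v : TangentSpace I₁ x),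
      LL₁ x u v + Ric₁ x u v - ((k : ℝ) / f x) * Hess1f x u v = lambda * g₁ x u v := by
    intro x u v
    have h := hsoliton x y u v 0 0
    simp only [hLL₂_zero, hLWg₂_zero, hg₂_zero, hRic₂_zero, mul_zero, add_zero, sub_zero] at h
    linarith
  have hkf : ∀ x, (k : ℝ) / f x ≠ 0 := fun x => (div_pos (by exact_mod_cast hk) (hf_pos x)).ne'
  exact ⟨base, forall_eq_iff_forall_eq_zero_of_sub_mul_eq hkf base⟩

theorem warped_product_second_soliton_base_equation
    -- the base (M₁, g₁)
    {E₁ : Type*} [NormedAddCommGroup E₁] [NormedSpace ℝ E₁]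
    {H₁ : Type*} [TopologicalSpace H₁] {I₁ : ModelWithCorners ℝ E₁ H₁}
    {M₁ : Type*} [TopologicalSpace M₁] [ChartedSpace H₁ M₁]
    [IsManifold I₁ (⊤ : ℕ∞) M₁]
    -- the fibre (M₂, g₂), of dimension `k`
    {E₂ : Type*} [NormedAddCommGroup E₂] [NormedSpace ℝ E₂]
    [FiniteDimensional ℝ E₂]
    {H₂ : Type*} [TopologicalSpace H₂] {I₂ : ModelWithCorners ℝ E₂ H₂}
    {M₂ : Type*} [TopologicalSpace M₂] [ChartedSpace H₂ M₂]
    [IsManifold I₂ (⊤ : ℕ∞) M₂] [Nonempty M₂]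
    (k : ℕ) (hk : 0 < k) (hk_dim : Module.finrank ℝ E₂ = k)
    -- the warping function `f : M₁ → ℝ⁺`
    (f : M₁ → ℝ) (hf_pos : ∀ x, 0 < f x) (hf : ContMDiff I₁ 𝓘(ℝ, ℝ) (⊤ : ℕ∞) f)
    -- tensors on `M₁`: metric, Ricci curvature, `𝓛_{W₁}𝓛_{W₁}g₁`, `Hess₁ f`
    (g₁ Ric₁ LL₁ Hess1f : ∀ x : M₁, TangentSpace I₁ x → TangentSpace I₁ x → ℝ)
    -- tensors on `M₂`: metric, Ricci curvature, `𝓛_{W₂}g₂`, `𝓛_{W₂}𝓛_{W₂}g₂`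
    (g₂ Ric₂ LWg₂ LL₂ : ∀ y : M₂, TangentSpace I₂ y → TangentSpace I₂ y → ℝ)
    -- `Wᵢ` tangent to `Mᵢ`
    (W₁ : ∀ x : M₁, TangentSpace I₁ x) (W₂ : ∀ y : M₂, TangentSpace I₂ y)
    -- `W₁(f²)`, `W₁(W₁(f²))`, `Δf` and `⟨∇f, ∇f⟩` on `(M₁, g₁)`
    (W1f2 W1W1f2 lapf gradfSq : M₁ → ℝ)
    (hW1f2 : ∀ x, W1f2 x =
      (show ℝ from mfderiv I₁ 𝓘(ℝ, ℝ) (fun y => (f y) ^ 2) x (W₁ x)))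
    (hW1W1f2 : ∀ x, W1W1f2 x =
      (show ℝ from mfderiv I₁ 𝓘(ℝ, ℝ) W1f2 x (W₁ x)))
    -- the tensors on `M₂` vanish on zero vectors (bilinearity)
    (hLL₂_zero : ∀ y : M₂, LL₂ y 0 0 = 0)
    (hLWg₂_zero : ∀ y : M₂, LWg₂ y 0 0 = 0)
    (hg₂_zero : ∀ y : M₂, g₂ y 0 0 = 0)
    (hRic₂_zero : ∀ y : M₂, Ric₂ y 0 0 = 0)
    (lambda : ℝ)
    -- the second Ricci soliton equation `𝓛_W𝓛_W g + Ric = λ g` on `M₁ ×_f M₂`,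
    -- written through the warped-product decompositions of `𝓛_W𝓛_W g` and `Ric`
    (hsoliton : ∀ (x : M₁) (y : M₂) (u₁ v₁ : TangentSpace I₁ x)
      (u₂ v₂ : TangentSpace I₂ y),
      (LL₁ x u₁ v₁ + (f x) ^ 2 * LL₂ y u₂ v₂ + 2 * W1f2 x * LWg₂ y u₂ v₂
          + W1W1f2 x * g₂ y u₂ v₂)
        + ((Ric₁ x u₁ v₁ - ((k : ℝ) / f x) * Hess1f x u₁ v₁)
          + (Ric₂ y u₂ v₂ - (lapf x / f x + ((k : ℝ) - 1) * gradfSq x / (f x) ^ 2)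
              * g₂ y u₂ v₂))
        = lambda * (g₁ x u₁ v₁ + (f x) ^ 2 * g₂ y u₂ v₂)) :
    -- (i) the induced equation on the base `M₁`
    (∀ (x : M₁) (u v : TangentSpace I₁ x),
      LL₁ x u v + Ric₁ x u v - ((k : ℝ) / f x) * Hess1f x u v
        = lambda * g₁ x u v) ∧
    -- (ii) `(M₁, g₁, W₁, λ)` is a second Ricci soliton iff `Hess₁ f = 0`
    ((∀ (x : M₁) (u v : TangentSpace I₁ x),
        LL₁ x u v + Ric₁ x u v = lambda * g₁ x u v) ↔
      ∀ (x : M₁) (u v : TangentSpace I₁ x), Hess1f x u v = 0) :=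
  warped_product_second_soliton_base_equation_general k hk f hf_pos g₁ Ric₁ LL₁ Hess1f g₂ Ric₂ LWg₂
    LL₂ W1f2 W1W1f2 lapf gradfSq hLL₂_zero hLWg₂_zero hg₂_zero hRic₂_zero lambda hsoliton
end
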